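/- Let E be a semilattice and (X,E,p) a presheaf over E. Then: (1) the projection γ : T_X → T_E defined by (α,θ) ↦ θ is an idempotent-separating homomorphism of inverse semigroups, and the semilattice of idempotents E(T_X) is isomorphic to E; (2) if p is surjective, then the projection T_X → I(X) defined by (α,θ) ↦ α is injective. -/
import Mathlib


/-- A meet-semilattice: a commutative semigroup all of whose elements are idempotent. -/
class MeetSL (E : Type*) extends CommSemigroup E where
  idem : ∀ e : E, e * e = e

/-- The natural partial order on a meet-semilattice: `e ≤ f` iff `e = ef`. -/
def sle {E : Type*} [MeetSL E] (e f : E) : Prop := e = e * f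

/-- The principal order-ideal `e↓ = {h ∈ E : h ≤ e}` of a meet-semilattice. -/
abbrev dOn (E : Type*) [MeetSL E] (e : E) : Type _ := {h : E // sle h e}

/-- A presheaf of sets over a meet-semilattice `E`, viewed as a supported action
`(X, E, p)` of `E` on `X`. -/
structure SPresheaf (X : Type*) (E : Type*) [MeetSL E] where
  act : X → E → X
  p : X → E
  act_act : ∀ x e f, act (act x e) f = act x (e * f)
  act_p : ∀ x, act x (p x) = x
  p_act : ∀ x e, p (act x e) = p x * e

namespace SPresheaf
variable {X E : Type*} [MeetSL E]

/-- The natural partial order on a presheaf: `x ≤ y` iff `x = y · p(x)`. -/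
def xle (P : SPresheaf X E) (x y : X) : Prop := x = P.act y (P.p x)

/-- The underlying set `X · e = {x ∈ X : p(x) ≤ e}` of the principal subpresheaf at `e`. -/
abbrev sub (P : SPresheaf X E) (e : E) : Type _ := {x : X // sle (P.p x) e}

end SPresheaf

/-- An element of the generalised Munn semigroup `T_X` of the presheaf `P`: an isomorphism
`(α, θ)` between the principal subpresheaves `(X·e, e↓)` and `(X·f, f↓)`, i.e. a pair of
order-isomorphisms with `p(α(x)) = θ(p(x))` for all `x ∈ X·e`. -/
structure MunnElt {X E : Type*} [MeetSL E] (P : SPresheaf X E) where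
  e : E
  f : E
  α : P.sub e ≃ P.sub f
  θ : dOn E e ≃ dOn E f
  α_ord : ∀ x y : P.sub e, P.xle x.1 y.1 ↔ P.xle (α x).1 (α y).1
  θ_ord : ∀ a b : dOn E e, sle a.1 b.1 ↔ sle (θ a).1 (θ b).1
  compat : ∀ x : P.sub e, P.p (α x).1 = (θ ⟨P.p x.1, x.2⟩).1

namespace MunnElt
variable {X E : Type*} [MeetSL E] {P : SPresheaf X E}

/-- The partial-bijection graph of the first component of a Munn element. -/
def maps (t : MunnElt P) (x y : X) : Prop :=
  ∃ h : sle (P.p x) t.e, (t.α ⟨x, h⟩).1 = y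

/-- The partial-bijection graph of the second component of a Munn element. -/
def mapsE (t : MunnElt P) (a b : E) : Prop :=
  ∃ h : sle a t.e, (t.θ ⟨a, h⟩).1 = b

end MunnElt

/-- `mul` is the multiplication of the generalised Munn semigroup `T_X`: the product
`mul a b` is obtained by restricting `a` and `b` to the intersection of the relevant
principal subpresheaves and composing (apply `b` first, then `a`). -/
def IsMunnMul {X E : Type*} [MeetSL E] {P : SPresheaf X E}
    (mul : MunnElt P → MunnElt P → MunnElt P) : Prop :=
  ∀ a b : MunnElt P,
    (∀ x z : X, (mul a b).maps x z ↔ ∃ y, b.maps x y ∧ a.maps y z) ∧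
    (∀ h k : E, (mul a b).mapsE h k ↔ ∃ m, b.mapsE h m ∧ a.mapsE m k)

/-- `inv` sends each `(α, θ)` of the generalised Munn semigroup to `(α⁻¹, θ⁻¹)`. -/
def IsMunnInv {X E : Type*} [MeetSL E] {P : SPresheaf X E}
    (inv : MunnElt P → MunnElt P) : Prop :=
  ∀ t : MunnElt P,
    (∀ x y : X, (inv t).maps x y ↔ t.maps y x) ∧
    (∀ a b : E, (inv t).mapsE a b ↔ t.mapsE b a)

/-- An element of the (classical) Munn semigroup `T_E` of a meet-semilattice `E`:
an order-isomorphism between principal order-ideals `e↓` and `f↓` of `E`. -/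
structure MunnEltE (E : Type*) [MeetSL E] where
  e : E
  f : E
  θ : dOn E e ≃ dOn E f
  θ_ord : ∀ a b : dOn E e, sle a.1 b.1 ↔ sle (θ a).1 (θ b).1

/-- The partial-bijection graph of an element of the Munn semigroup `T_E`. -/
def MunnEltE.mapsE {E : Type*} [MeetSL E] (t : MunnEltE E) (a b : E) : Prop :=
  ∃ h : sle a t.e, (t.θ ⟨a, h⟩).1 = b

/-- `mul` is the multiplication of the Munn semigroup `T_E`: composition of the
appropriate restrictions (apply `b` first, then `a`). -/
def IsMunnMulE {E : Type*} [MeetSL E] (mul : MunnEltE E → MunnEltE E → MunnEltE E) : Prop :=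
  ∀ a b : MunnEltE E, ∀ h k : E,
    (mul a b).mapsE h k ↔ ∃ m, b.mapsE h m ∧ a.mapsE m k

/-- The projection `γ : T_X → T_E`, `(α, θ) ↦ θ`. -/
def MunnElt.proj {X E : Type*} [MeetSL E] {P : SPresheaf X E} (t : MunnElt P) : MunnEltE E :=
  ⟨t.e, t.f, t.θ, t.θ_ord⟩


section Aux
variable {X E : Type*} [MeetSL E] {P : SPresheaf X E}

lemma sle_refl (e : E) : sle e e := (MeetSL.idem e).symm

lemma sle_antisymm {e f : E} (h1 : sle e f) (h2 : sle f e) : e = f := by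
  calc e = e * f := h1
    _ = f * e := mul_comm e f
    _ = f := h2.symm

lemma sle_mul_iff {a e f : E} : sle a (e * f) ↔ sle a e ∧ sle a f := by
  constructor
  · intro h
    constructor
    · have key : a * e = a := by
        calc a * e = (a * (e * f)) * e := by rw [← h]
          _ = a * (e * (f * e)) := by rw [mul_assoc, mul_assoc]
          _ = a * (e * (e * f)) := by rw [mul_comm f e]
          _ = a * ((e * e) * f) := by rw [← mul_assoc e e f]
          _ = a * (e * f) := by rw [MeetSL.idem]
          _ = a := h.symm
      exact key.symm
    · have key : a * f = a := by
        calc a * f = (a * (e * f)) * f := by rw [← h]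
          _ = a * (e * (f * f)) := by rw [mul_assoc, mul_assoc]
          _ = a * (e * f) := by rw [MeetSL.idem]
          _ = a := h.symm
      exact key.symm
  · rintro ⟨h1, h2⟩
    calc a = a * f := h2
      _ = (a * e) * f := by rw [← h1]
      _ = a * (e * f) := mul_assoc a e f

lemma MunnElt.maps_unique {t : MunnElt P} {x y y' : X}
    (h : t.maps x y) (h' : t.maps x y') : y = y' := by
  obtain ⟨hx, rfl⟩ := h; obtain ⟨hx', rfl⟩ := h'; rfl

lemma MunnElt.mapsE_unique {t : MunnElt P} {c d d' : E}
    (h : t.mapsE c d) (h' : t.mapsE c d') : d = d' := by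
  obtain ⟨hc, rfl⟩ := h; obtain ⟨hc', rfl⟩ := h'; rfl

lemma MunnElt.ext' {a b : MunnElt P} (he : a.e = b.e) (hf : a.f = b.f)
    (hα : ∀ (x : X) (hx : sle (P.p x) a.e) (hx' : sle (P.p x) b.e),
      (a.α ⟨x, hx⟩).1 = (b.α ⟨x, hx'⟩).1)
    (hθ : ∀ (c : E) (hc : sle c a.e) (hc' : sle c b.e),
      (a.θ ⟨c, hc⟩).1 = (b.θ ⟨c, hc'⟩).1) : a = b := by
  obtain ⟨e, f, α, θ, o1, o2, o3⟩ := a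
  obtain ⟨e', f', α', θ', o1', o2', o3'⟩ := b
  simp only at he hf hα hθ
  subst he; subst hf
  have h1 : α = α' := Equiv.ext fun x => Subtype.ext (hα x.1 x.2 x.2)
  have h2 : θ = θ' := Equiv.ext fun c => Subtype.ext (hθ c.1 c.2 c.2)
  subst h1; subst h2; rfl

lemma MunnEltE.ext' {a b : MunnEltE E} (he : a.e = b.e) (hf : a.f = b.f)
    (hθ : ∀ (c : E) (hc : sle c a.e) (hc' : sle c b.e),
      (a.θ ⟨c, hc⟩).1 = (b.θ ⟨c, hc'⟩).1) : a = b := by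
  obtain ⟨e, f, θ, o⟩ := a
  obtain ⟨e', f', θ', o'⟩ := b
  simp only at he hf hθ
  subst he; subst hf
  have h2 : θ = θ' := Equiv.ext fun c => Subtype.ext (hθ c.1 c.2 c.2)
  subst h2; rfl

/-- `f` is determined by the `mapsE` graph as the maximum of the range. -/
lemma MunnEltE.graph_f_le {a b : MunnEltE E}
    (h2 : ∀ c d : E, a.mapsE c d → b.mapsE c d) : sle a.f b.f := by
  have hae : a.mapsE (a.θ.symm ⟨a.f, sle_refl a.f⟩).1 a.f :=
    ⟨(a.θ.symm ⟨a.f, sle_refl a.f⟩).2, by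
      show (a.θ (a.θ.symm ⟨a.f, sle_refl a.f⟩)).1 = a.f
      rw [Equiv.apply_symm_apply]⟩
  obtain ⟨hcb, heq⟩ := h2 _ a.f hae
  have := (b.θ ⟨_, hcb⟩).2
  rwa [heq] at this

lemma MunnEltE.ext_of_graph {a b : MunnEltE E}
    (h2 : ∀ c d : E, a.mapsE c d ↔ b.mapsE c d) : a = b := by
  have he : a.e = b.e := by
    obtain ⟨h1, -⟩ := (h2 a.e (a.θ ⟨a.e, sle_refl a.e⟩).1).mp ⟨sle_refl a.e, rfl⟩
    obtain ⟨h2', -⟩ := (h2 b.e (b.θ ⟨b.e, sle_refl b.e⟩).1).mpr ⟨sle_refl b.e, rfl⟩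
    exact sle_antisymm h1 h2'
  have hf : a.f = b.f :=
    sle_antisymm (MunnEltE.graph_f_le fun c d h => (h2 c d).mp h)
      (MunnEltE.graph_f_le fun c d h => (h2 c d).mpr h)
  refine MunnEltE.ext' he hf ?_
  intro c hc hc'
  obtain ⟨h, heq⟩ := (h2 c (a.θ ⟨c, hc⟩).1).mp ⟨hc, rfl⟩
  exact heq.symm.trans (congrArg (fun z => (b.θ z).1) (Subtype.ext rfl))

/-- The identity element of the generalised Munn semigroup at `e`. -/
def idElt (P : SPresheaf X E) (e : E) : MunnElt P where
  e := e
  f := e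
  α := Equiv.refl _
  θ := Equiv.refl _
  α_ord := fun _ _ => Iff.rfl
  θ_ord := fun _ _ => Iff.rfl
  compat := fun _ => rfl

lemma idElt_maps {e : E} {x y : X} :
    (idElt P e).maps x y ↔ sle (P.p x) e ∧ x = y :=
  ⟨fun ⟨h, hh⟩ => ⟨h, hh⟩, fun ⟨h, hh⟩ => ⟨h, hh⟩⟩

lemma idElt_mapsE {e : E} {c d : E} :
    (idElt P e).mapsE c d ↔ sle c e ∧ c = d :=
  ⟨fun ⟨h, hh⟩ => ⟨h, hh⟩, fun ⟨h, hh⟩ => ⟨h, hh⟩⟩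

lemma MunnElt.ext_of_graphs {a b : MunnElt P}
    (h1 : ∀ x y : X, a.maps x y ↔ b.maps x y)
    (h2 : ∀ c d : E, a.mapsE c d ↔ b.mapsE c d) : a = b := by
  have he : a.e = b.e := by
    obtain ⟨h1', -⟩ := (h2 a.e (a.θ ⟨a.e, sle_refl a.e⟩).1).mp ⟨sle_refl a.e, rfl⟩
    obtain ⟨h2', -⟩ := (h2 b.e (b.θ ⟨b.e, sle_refl b.e⟩).1).mpr ⟨sle_refl b.e, rfl⟩
    exact sle_antisymm h1' h2'
  have hproj : a.proj = b.proj := MunnEltE.ext_of_graph h2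
  have hf : a.f = b.f := congrArg MunnEltE.f hproj
  refine MunnElt.ext' he hf ?_ ?_
  · intro x hx hx'
    obtain ⟨h, heq⟩ := (h1 x (a.α ⟨x, hx⟩).1).mp ⟨hx, rfl⟩
    exact heq.symm.trans (congrArg (fun z => (b.α z).1) (Subtype.ext rfl))
  · intro c hc hc'
    obtain ⟨h, heq⟩ := (h2 c (a.θ ⟨c, hc⟩).1).mp ⟨hc, rfl⟩
    exact heq.symm.trans (congrArg (fun z => (b.θ z).1) (Subtype.ext rfl))

/-- Every idempotent is an identity element. -/
lemma MunnElt.idem_eq {mulX : MunnElt P → MunnElt P → MunnElt P} (hX : IsMunnMul mulX)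
    {t : MunnElt P} (ht : mulX t t = t) : t = idElt P t.e := by
  have hm := (hX t t).1
  have hmE := (hX t t).2
  rw [ht] at hm hmE
  have hα : ∀ (x : X) (hx : sle (P.p x) t.e), (t.α ⟨x, hx⟩).1 = x := by
    intro x hx
    obtain ⟨y, hxy, hyz⟩ := (hm x (t.α ⟨x, hx⟩).1).mp ⟨hx, rfl⟩
    have hy : y = (t.α ⟨x, hx⟩).1 := MunnElt.maps_unique hxy ⟨hx, rfl⟩
    subst hy
    obtain ⟨hy2, heq⟩ := hyz
    have h3 : t.α ⟨(t.α ⟨x, hx⟩).1, hy2⟩ = t.α ⟨x, hx⟩ := Subtype.ext heq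
    have h4 := t.α.injective h3
    exact (congrArg Subtype.val h4)
  have hθ : ∀ (c : E) (hc : sle c t.e), (t.θ ⟨c, hc⟩).1 = c := by
    intro c hc
    obtain ⟨m, hcm, hmd⟩ := (hmE c (t.θ ⟨c, hc⟩).1).mp ⟨hc, rfl⟩
    have hm' : m = (t.θ ⟨c, hc⟩).1 := MunnElt.mapsE_unique hcm ⟨hc, rfl⟩
    subst hm'
    obtain ⟨hm2, heq⟩ := hmd
    have h3 : t.θ ⟨(t.θ ⟨c, hc⟩).1, hm2⟩ = t.θ ⟨c, hc⟩ := Subtype.ext heq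
    have h4 := t.θ.injective h3
    exact (congrArg Subtype.val h4)
  have hf : t.f = t.e := by
    have h1 : sle t.e t.f := by
      have := (t.θ ⟨t.e, sle_refl t.e⟩).2
      rwa [hθ t.e (sle_refl t.e)] at this
    have h2 : sle t.f t.e := by
      have hv : (t.θ (t.θ.symm ⟨t.f, sle_refl t.f⟩)).1 = t.f := by
        rw [Equiv.apply_symm_apply]
      rw [hθ _ (t.θ.symm ⟨t.f, sle_refl t.f⟩).2] at hv
      rw [← hv]; exact (t.θ.symm ⟨t.f, sle_refl t.f⟩).2
    exact sle_antisymm h2 h1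
  refine MunnElt.ext' rfl hf ?_ ?_
  · intro x hx hx'
    exact hα x hx
  · intro c hc hc'
    exact hθ c hc

end Aux

/-- (1) the projection `γ : T_X → T_E`, `(α, θ) ↦ θ`, is an
idempotent-separating homomorphism, and the semilattice of idempotents of `T_X` is
isomorphic to `E`; (2) if `p` is surjective then the projection `T_X → I(X)`,
`(α, θ) ↦ α`, is injective. -/
theorem munn_projections {X E : Type*} [MeetSL E] (P : SPresheaf X E)
    (mulX : MunnElt P → MunnElt P → MunnElt P) (hX : IsMunnMul mulX)
    (mulE : MunnEltE E → MunnEltE E → MunnEltE E) (hE : IsMunnMulE mulE) :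
    (∀ a b : MunnElt P, (mulX a b).proj = mulE a.proj b.proj) ∧
    (∀ a b : MunnElt P, mulX a a = a → mulX b b = b → a.proj = b.proj → a = b) ∧
    (∃ i : E → MunnElt P, Function.Injective i ∧ (∀ e : E, mulX (i e) (i e) = i e) ∧
      (∀ t : MunnElt P, mulX t t = t → ∃ e : E, i e = t) ∧
      (∀ e f : E, i (e * f) = mulX (i e) (i f))) ∧
    (Function.Surjective P.p →
      ∀ a b : MunnElt P, (∀ x y : X, a.maps x y ↔ b.maps x y) → a = b) := by
  have projE : ∀ t : MunnElt P, ∀ c d : E, t.proj.mapsE c d ↔ t.mapsE c d :=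
    fun t c d => Iff.rfl
  refine ⟨?_, ?_, ?_, ?_⟩
  · -- γ is a homomorphism
    intro a b
    refine MunnEltE.ext_of_graph ?_
    intro c d
    rw [projE, (hX a b).2, hE a.proj b.proj]
    exact Iff.rfl
  · -- γ is idempotent-separating
    intro a b ha hb hproj
    have hea : a = idElt P a.e := MunnElt.idem_eq hX ha
    have heb : b = idElt P b.e := MunnElt.idem_eq hX hb
    have : a.e = b.e := congrArg MunnEltE.e hproj
    rw [hea, heb, this]
  · -- E(T_X) ≅ E
    refine ⟨fun e => idElt P e, ?_, ?_, ?_, ?_⟩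
    · intro e f h
      exact congrArg MunnElt.e h
    · intro e
      refine MunnElt.ext_of_graphs ?_ ?_
      · intro x z
        rw [(hX _ _).1]
        simp only [idElt_maps]
        constructor
        · rintro ⟨y, ⟨h1, rfl⟩, ⟨h2, rfl⟩⟩; exact ⟨h1, rfl⟩
        · rintro ⟨h1, rfl⟩; exact ⟨x, ⟨h1, rfl⟩, ⟨h1, rfl⟩⟩
      · intro c d
        rw [(hX _ _).2]
        simp only [idElt_mapsE]
        constructor
        · rintro ⟨m, ⟨h1, rfl⟩, ⟨h2, rfl⟩⟩; exact ⟨h1, rfl⟩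
        · rintro ⟨h1, rfl⟩; exact ⟨c, ⟨h1, rfl⟩, ⟨h1, rfl⟩⟩
    · intro t ht
      exact ⟨t.e, (MunnElt.idem_eq hX ht).symm⟩
    · intro e f
      refine MunnElt.ext_of_graphs ?_ ?_
      · intro x z
        rw [(hX _ _).1]
        simp only [idElt_maps, sle_mul_iff]
        constructor
        · rintro ⟨⟨h1, h2⟩, rfl⟩; exact ⟨x, ⟨h2, rfl⟩, ⟨h1, rfl⟩⟩
        · rintro ⟨y, ⟨h1, rfl⟩, ⟨h2, rfl⟩⟩; exact ⟨⟨h2, h1⟩, rfl⟩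
      · intro c d
        rw [(hX _ _).2]
        simp only [idElt_mapsE, sle_mul_iff]
        constructor
        · rintro ⟨⟨h1, h2⟩, rfl⟩; exact ⟨c, ⟨h2, rfl⟩, ⟨h1, rfl⟩⟩
        · rintro ⟨m, ⟨h1, rfl⟩, ⟨h2, rfl⟩⟩; exact ⟨⟨h2, h1⟩, rfl⟩
  · -- injectivity of the α-projection when p is surjective
    intro hsurj a b h1
    have he : a.e = b.e := by
      obtain ⟨x, hx⟩ := hsurj a.e
      have hxa : sle (P.p x) a.e := by rw [hx]; exact sle_refl a.e
      obtain ⟨hxb, -⟩ := (h1 x (a.α ⟨x, hxa⟩).1).mp ⟨hxa, rfl⟩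
      obtain ⟨y, hy⟩ := hsurj b.e
      have hyb : sle (P.p y) b.e := by rw [hy]; exact sle_refl b.e
      obtain ⟨hya, -⟩ := (h1 y (b.α ⟨y, hyb⟩).1).mpr ⟨hyb, rfl⟩
      rw [hx] at hxb; rw [hy] at hya
      exact sle_antisymm hxb hya
    have hα : ∀ (x : X) (hx : sle (P.p x) a.e) (hx' : sle (P.p x) b.e),
        (a.α ⟨x, hx⟩).1 = (b.α ⟨x, hx'⟩).1 := by
      intro x hx hx'
      obtain ⟨h, heq⟩ := (h1 x (a.α ⟨x, hx⟩).1).mp ⟨hx, rfl⟩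
      exact heq.symm.trans (congrArg (fun z => (b.α z).1) (Subtype.ext rfl))
    have hθ : ∀ (c : E) (hc : sle c a.e) (hc' : sle c b.e),
        (a.θ ⟨c, hc⟩).1 = (b.θ ⟨c, hc'⟩).1 := by
      intro c hc hc'
      obtain ⟨x, hx⟩ := hsurj c
      have hxa : sle (P.p x) a.e := by rw [hx]; exact hc
      have hxb : sle (P.p x) b.e := by rw [hx]; exact hc'
      have c1 := a.compat ⟨x, hxa⟩
      have c2 := b.compat ⟨x, hxb⟩
      have e1 : (a.θ ⟨P.p x, hxa⟩).1 = (a.θ ⟨c, hc⟩).1 :=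
        congrArg (fun z => (a.θ z).1) (Subtype.ext hx)
      have e2 : (b.θ ⟨P.p x, hxb⟩).1 = (b.θ ⟨c, hc'⟩).1 :=
        congrArg (fun z => (b.θ z).1) (Subtype.ext hx)
      rw [← e1, ← e2, ← c1, ← c2, hα x hxa hxb]
    have hf : a.f = b.f := by
      have hab : sle a.f b.f := by
        have hv : (a.θ (a.θ.symm ⟨a.f, sle_refl a.f⟩)).1 = a.f := by
          rw [Equiv.apply_symm_apply]
        have hcb : sle (a.θ.symm ⟨a.f, sle_refl a.f⟩).1 b.e := by
          rw [← he]; exact (a.θ.symm ⟨a.f, sle_refl a.f⟩).2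
        have hm := (b.θ ⟨_, hcb⟩).2
        rwa [← hθ _ (a.θ.symm ⟨a.f, sle_refl a.f⟩).2 hcb, hv] at hm
      have hba : sle b.f a.f := by
        have hv : (b.θ (b.θ.symm ⟨b.f, sle_refl b.f⟩)).1 = b.f := by
          rw [Equiv.apply_symm_apply]
        have hca : sle (b.θ.symm ⟨b.f, sle_refl b.f⟩).1 a.e := by
          rw [he]; exact (b.θ.symm ⟨b.f, sle_refl b.f⟩).2
        have hm := (a.θ ⟨_, hca⟩).2
        rwa [hθ _ hca (b.θ.symm ⟨b.f, sle_refl b.f⟩).2, hv] at hm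
      exact sle_antisymm hab hba
    exact MunnElt.ext' he hf hα hθ
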